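/- Let M be a metric space with base point 0. Suppose (m_{xᵢyᵢ})_{i∈I} is a (finite or countably infinite) family of molecules, each of which is a Δ-point of B_{F(M)}, and each satisfying the slice-shrinking property: for every ε > 0 and every slice S of B_{F(M)} containing m_{xᵢyᵢ} there exist u ≠ v with m_{uv} ∈ S and d(u,v) < ε. If λᵢ > 0 with Σ_{i∈I} λᵢ = 1 and μ := Σ_{i∈I} λᵢ m_{xᵢyᵢ} has norm 1, then μ is a Δ-point. -/

import Mathlib

/-- An abstract characterization of the Lipschitz-free space `F(M)` over a pointed
metric space `(M, base)`: a normed space `X` together with a map `δ : M → X`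
(the canonical embedding) such that `δ base = 0`, the span of `δ(M)` is dense,
every `1`-Lipschitz function vanishing at the base point extends to a functional of
norm at most one, and every functional of norm at most one induces a `1`-Lipschitz
function on `M`. These properties determine `F(M)` up to isometric isomorphism. -/
structure IsLipschitzFreeSpace (M : Type*) [MetricSpace M] (base : M)
    (X : Type*) [NormedAddCommGroup X] [NormedSpace ℝ X] (δ : M → X) : Prop where
  map_base : δ base = 0
  dense_span : (Submodule.span ℝ (Set.range δ)).topologicalClosure = ⊤
  extend_lipschitz : ∀ g : M → ℝ, LipschitzWith 1 g → g base = 0 →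
    ∃ φ : X →L[ℝ] ℝ, ‖φ‖ ≤ 1 ∧ ∀ p, φ (δ p) = g p
  lipschitz_of_dual : ∀ φ : X →L[ℝ] ℝ, ‖φ‖ ≤ 1 →
    LipschitzWith 1 (fun p => φ (δ p))

/-- The molecule `m_{xy} = (δ_x - δ_y) / d(x,y)`. -/
noncomputable def molecule {M : Type*} [MetricSpace M]
    {X : Type*} [NormedAddCommGroup X] [NormedSpace ℝ X]
    (δ : M → X) (x y : M) : X :=
  (dist x y)⁻¹ • (δ x - δ y)

/-- `μ` is a Daugavet-point: every slice `S(f,α)` of the unit ball contains, for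
every `ε > 0`, an element at distance at least `2 - ε` from `μ`. -/
def IsDaugavetPoint {X : Type*} [NormedAddCommGroup X] [NormedSpace ℝ X]
    (μ : X) : Prop :=
  ∀ f : X →L[ℝ] ℝ, ‖f‖ = 1 → ∀ α : ℝ, 0 < α → ∀ ε : ℝ, 0 < ε →
    ∃ ν : X, ‖ν‖ ≤ 1 ∧ f ν > 1 - α ∧ 2 - ε ≤ ‖μ - ν‖

/-- `μ` is a Δ-point: every slice `S(f,α)` of the unit ball containing `μ`
contains, for every `ε > 0`, an element at distance at least `2 - ε` from `μ`. -/
def IsDeltaPoint {X : Type*} [NormedAddCommGroup X] [NormedSpace ℝ X]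
    (μ : X) : Prop :=
  ∀ f : X →L[ℝ] ℝ, ‖f‖ = 1 → ∀ α : ℝ, 0 < α → f μ > 1 - α →
    ∀ ε : ℝ, 0 < ε → ∃ ν : X, ‖ν‖ ≤ 1 ∧ f ν > 1 - α ∧ 2 - ε ≤ ‖μ - ν‖

/-- `ν` is a denting point of the unit ball: `‖ν‖ ≤ 1` and `ν` belongs to slices of
the unit ball of arbitrarily small diameter. -/
def IsDentingPoint {X : Type*} [NormedAddCommGroup X] [NormedSpace ℝ X]
    (ν : X) : Prop :=
  ‖ν‖ ≤ 1 ∧ ∀ ε : ℝ, 0 < ε → ∃ f : X →L[ℝ] ℝ, ∃ α : ℝ, ‖f‖ = 1 ∧ 0 < α ∧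
    f ν > 1 - α ∧ ∀ w w' : X, ‖w‖ ≤ 1 → f w > 1 - α → ‖w'‖ ≤ 1 → f w' > 1 - α →
      ‖w - w'‖ < ε

/-!
Some molecule of the convex series lies in the slice (the weights sum to one), so by the
slice-shrinking property the slice contains molecules `m_{uv}` with `d(u,v)` as small as we like.
Such molecules are almost antipodal to `μ`: if `f₀` norms `μ`, replacing its restriction to `M` by
its minimum with the cone `p ↦ f₀(δ u) - 2 d(u,v) + d(p,u)` gives a `1`-Lipschitz function, hence a
functional `φ` of norm at most one with `φ(m_{uv}) = -1` which is `2 d(u,v)`-close to `f₀` on `δ(M)`,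
hence close to `f₀` on a finitely supported approximation of `μ`; so `‖μ - m_{uv}‖ ≥ φ(μ) + 1 ≈ 2`.
-/

theorem exists_lt_apply_of_hasSum_smul {ι E : Type*} [AddCommGroup E] [Module ℝ E]
    [TopologicalSpace E] [IsTopologicalAddGroup E] [ContinuousConstSMul ℝ E]
    (f : E →L[ℝ] ℝ) {w : ι → ℝ} {m : ι → E} {μ : E} {c : ℝ}
    (hw : ∀ i, 0 ≤ w i) (hw1 : HasSum w 1) (hμ : HasSum (fun i => w i • m i) μ)
    (hc : c < f μ) : ∃ i, c < f (m i) := by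
  by_contra! h
  have hfμ : HasSum (fun i => w i * f (m i)) (f μ) := by
    simpa only [map_smul, smul_eq_mul] using hμ.mapL f
  have := hasSum_le (fun i => mul_le_mul_of_nonneg_left (h i) (hw i)) hfμ (hw1.mul_right c)
  linarith

theorem LipschitzWith.exists_close_sub_eq_dist {M : Type*} [PseudoMetricSpace M] {g₀ : M → ℝ}
    (hg₀ : LipschitzWith 1 g₀) (u v : M) :
    ∃ g : M → ℝ, LipschitzWith 1 g ∧ g v - g u = dist u v ∧
      ∀ p, g p ≤ g₀ p ∧ g₀ p - 2 * dist u v ≤ g p := by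
  have hg₀_le (p q : M) : g₀ p ≤ g₀ q + dist p q := by simpa using hg₀.le_add_mul p q
  have hcone : LipschitzWith 1 fun p => g₀ u - 2 * dist u v + dist p u :=
    .of_le_add fun p q => by linarith [dist_triangle p q u]
  refine ⟨fun p => min (g₀ p) (g₀ u - 2 * dist u v + dist p u), by simpa using hg₀.min hcone,
    ?_, fun p => ⟨min_le_left _ _, le_min ?_ ?_⟩⟩
  · have hu : g₀ u - 2 * dist u v ≤ g₀ u := by linarith [dist_nonneg (x := u) (y := v)]
    have hv : g₀ u - dist u v ≤ g₀ v := by linarith [hg₀_le u v]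
    simp only [dist_self, add_zero, min_eq_right hu, dist_comm v u]
    rw [min_eq_right (by linarith)]
    ring
  · linarith [dist_nonneg (x := u) (y := v)]
  · linarith [hg₀_le p u]

theorem IsLipschitzFreeSpace.exists_apply_molecule_eq_neg_one {M : Type*} [MetricSpace M]
    {base : M} {X : Type*} [NormedAddCommGroup X] [NormedSpace ℝ X] {δ : M → X}
    (hfree : IsLipschitzFreeSpace M base X δ) {f₀ : X →L[ℝ] ℝ} (hf₀ : ‖f₀‖ ≤ 1) {u v : M}
    (huv : u ≠ v) :
    ∃ φ : X →L[ℝ] ℝ, ‖φ‖ ≤ 1 ∧ φ (molecule δ u v) = -1 ∧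
      ∀ p, |φ (δ p) - f₀ (δ p)| ≤ 2 * dist u v := by
  obtain ⟨g, hg, hgvu, hgg₀⟩ := (hfree.lipschitz_of_dual f₀ hf₀).exists_close_sub_eq_dist u v
  have hg' : LipschitzWith 1 fun p => g p - g base :=
    .of_le_add fun p q => by
      linarith [show g p ≤ g q + dist p q by simpa using hg.le_add_mul p q]
  obtain ⟨φ, hφ, hφδ⟩ := hfree.extend_lipschitz _ hg' (sub_self _)
  refine ⟨φ, hφ, ?_, fun p => ?_⟩
  · have hd : dist u v ≠ 0 := dist_ne_zero.2 huv
    rw [molecule, map_smul, map_sub, hφδ, hφδ, smul_eq_mul]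
    field_simp
    linarith
  · have hbase : f₀ (δ base) = 0 := by rw [hfree.map_base, map_zero]
    rw [hφδ, abs_le]
    constructor <;> linarith [hgg₀ p, hgg₀ base]

theorem exists_abs_apply_le_mul_of_mem_span_range {ι E : Type*} [AddCommGroup E] [Module ℝ E]
    {e : ι → E} {ν : E} (hν : ν ∈ Submodule.span ℝ (Set.range e)) :
    ∃ C, 0 ≤ C ∧ ∀ ψ : E →ₗ[ℝ] ℝ, ∀ t, (∀ i, |ψ (e i)| ≤ t) → |ψ ν| ≤ C * t := by
  obtain ⟨c, rfl⟩ := Finsupp.mem_span_range_iff_exists_finsupp.1 hν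
  refine ⟨c.sum fun _ a => |a|, Finset.sum_nonneg fun _ _ => abs_nonneg _, fun ψ t ht => ?_⟩
  rw [map_finsuppSum, Finsupp.sum, Finsupp.sum, Finset.sum_mul]
  refine (Finset.abs_sum_le_sum_abs _ _).trans (Finset.sum_le_sum fun i _ => ?_)
  rw [map_smul, smul_eq_mul, abs_mul]
  exact mul_le_mul_of_nonneg_left (ht i) (abs_nonneg _)

theorem IsLipschitzFreeSpace.exists_pos_forall_le_norm_sub_molecule {M : Type*} [MetricSpace M]
    {base : M} {X : Type*} [NormedAddCommGroup X] [NormedSpace ℝ X] {δ : M → X}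
    (hfree : IsLipschitzFreeSpace M base X δ) (μ : X) {ε : ℝ} (hε : 0 < ε) :
    ∃ r > 0, ∀ u v, u ≠ v → dist u v < r → ‖μ‖ + 1 - ε ≤ ‖μ - molecule δ u v‖ := by
  have habs_le (ψ : X →L[ℝ] ℝ) (hψ : ‖ψ‖ ≤ 1) (w : X) : |ψ w| ≤ ‖w‖ := by
    simpa using ψ.le_of_opNorm_le hψ w
  obtain ⟨f₀, hf₀, hf₀μ⟩ := exists_dual_vector'' ℝ μ
  rw [RCLike.ofReal_real_eq_id, id] at hf₀μ
  have hμ_mem : μ ∈ closure (Submodule.span ℝ (Set.range δ) : Set X) := by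
    rw [← Submodule.topologicalClosure_coe, hfree.dense_span]
    trivial
  obtain ⟨ν, hν, hμν⟩ := Metric.mem_closure_iff.1 hμ_mem (ε / 4) (by positivity)
  obtain ⟨C, hC, hνC⟩ := exists_abs_apply_le_mul_of_mem_span_range hν
  refine ⟨ε / (8 * (C + 1)), by positivity, fun u v huv hd => ?_⟩
  obtain ⟨φ, hφ, hφm, hφδ⟩ := hfree.exists_apply_molecule_eq_neg_one hf₀ huv
  have hφν : |φ ν - f₀ ν| ≤ C * (2 * dist u v) := by
    simpa using hνC (φ - f₀).toLinearMap _ (by simpa using hφδ)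
  have hCd : C * (2 * dist u v) ≤ ε / 4 := by
    rw [lt_div_iff₀ (by positivity)] at hd
    nlinarith [dist_nonneg (x := u) (y := v)]
  have hφμν := abs_le.1 ((habs_le φ hφ (μ - ν)).trans (dist_eq_norm μ ν ▸ hμν.le))
  have hf₀μν := abs_le.1 ((habs_le f₀ hf₀ (μ - ν)).trans (dist_eq_norm μ ν ▸ hμν.le))
  calc ‖μ‖ + 1 - ε ≤ φ (μ - molecule δ u v) := by
        rw [map_sub, hφm]
        rw [map_sub] at hφμν hf₀μν
        linarith [(abs_le.1 hφν).1]
    _ ≤ ‖μ - molecule δ u v‖ := (le_abs_self _).trans (habs_le φ hφ _)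

theorem stmt17_general {M : Type*} [MetricSpace M] (base : M)
    {X : Type*} [NormedAddCommGroup X] [NormedSpace ℝ X] (δ : M → X)
    (hfree : IsLipschitzFreeSpace M base X δ)
    {I : Type*} (lam : I → ℝ) (x y : I → M)
    (hshrink : ∀ i, ∀ ε : ℝ, 0 < ε → ∀ f : X →L[ℝ] ℝ, ‖f‖ = 1 →
      ∀ α : ℝ, 0 < α → f (molecule δ (x i) (y i)) > 1 - α →
        ∃ u v : M, u ≠ v ∧ ‖molecule δ u v‖ ≤ 1 ∧
          f (molecule δ u v) > 1 - α ∧ dist u v < ε)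
    (hlam : ∀ i, 0 < lam i) (hlamsum : HasSum lam 1)
    (μ : X) (hμsum : HasSum (fun i => lam i • molecule δ (x i) (y i)) μ)
    (hμ : ‖μ‖ = 1) :
    IsDeltaPoint μ := by
  intro f hf α hα hfμ ε hε
  obtain ⟨i, hi⟩ := exists_lt_apply_of_hasSum_smul f (fun i => (hlam i).le) hlamsum hμsum hfμ
  obtain ⟨r, hr, hfar⟩ := hfree.exists_pos_forall_le_norm_sub_molecule μ hε
  obtain ⟨u, v, huv, hnorm, hslice, hdist⟩ := hshrink i r hr f hf α hα hi
  exact ⟨molecule δ u v, hnorm, hslice, by linarith [hfar u v huv hdist]⟩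

/-- Corollary 4.4: a norm-one (finite or countably infinite) convex
combination of molecules which are Δ-points with the slice-shrinking property is a
Δ-point. -/
theorem stmt17 {M : Type*} [MetricSpace M] (base : M)
    {X : Type*} [NormedAddCommGroup X] [NormedSpace ℝ X] (δ : M → X)
    (hfree : IsLipschitzFreeSpace M base X δ)
    {I : Type*} [Countable I] (lam : I → ℝ) (x y : I → M)
    (hxy : ∀ i, x i ≠ y i)
    (hdelta : ∀ i, IsDeltaPoint (molecule δ (x i) (y i)))
    (hshrink : ∀ i, ∀ ε : ℝ, 0 < ε → ∀ f : X →L[ℝ] ℝ, ‖f‖ = 1 →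
      ∀ α : ℝ, 0 < α → f (molecule δ (x i) (y i)) > 1 - α →
        ∃ u v : M, u ≠ v ∧ ‖molecule δ u v‖ ≤ 1 ∧
          f (molecule δ u v) > 1 - α ∧ dist u v < ε)
    (hlam : ∀ i, 0 < lam i) (hlamsum : HasSum lam 1)
    (μ : X) (hμsum : HasSum (fun i => lam i • molecule δ (x i) (y i)) μ)
    (hμ : ‖μ‖ = 1) :
    IsDeltaPoint μ :=
  stmt17_general base δ hfree lam x y hshrink hlam hlamsum μ hμsum hμ
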